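/- Let B_1, B_2, B_3, B_4 ∈ UT(4,ℤ) satisfy Σ_{i=1}^4 φ0(B_i) = 0 and suppose the ℝ≥0-cone generated by φ0(B_1), φ0(B_2), φ0(B_3), φ0(B_4) equals ℝ³. Then (each B(σ,t) lies in U_1 and) the ℝ≥0-cone generated by the set {φ1(B(σ,t)) : σ a permutation of {1,2,3,4}, t ∈ ℤ≥0}, viewed in ℝ², equals all of ℝ². -/

import Mathlib

open Finset

/-- The 4×4 upper unitriangular integer matrix `UT(a,b,c;d,e,f)`. -/
def UT (a b c d e f : ℤ) : Matrix (Fin 4) (Fin 4) ℤ :=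
  !![1, a, d, f; 0, 1, b, e; 0, 0, 1, c; 0, 0, 0, 1]

/-- The set `UT(4,ℤ)` of 4×4 upper unitriangular integer matrices. -/
def UT4 : Set (Matrix (Fin 4) (Fin 4) ℤ) :=
  {M | ∃ a b c d e f, M = UT a b c d e f}

/-- `φ0 : UT(4,ℤ) → ℤ³`, `UT(a,b,c;d,e,f) ↦ (a,b,c)`. -/
def phi0 (M : Matrix (Fin 4) (Fin 4) ℤ) : Fin 3 → ℤ :=
  ![M 0 1, M 1 2, M 2 3]

/-- `φ0` followed by the embedding `ℤ³ → ℝ³`. -/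
def phi0R (M : Matrix (Fin 4) (Fin 4) ℤ) : Fin 3 → ℝ :=
  fun i => (phi0 M i : ℝ)

/-- `φ1` (the `(d,e)` part), followed by the embedding `ℤ² → ℝ²`. -/
def phi1R (M : Matrix (Fin 4) (Fin 4) ℤ) : Fin 2 → ℝ :=
  ![(M 0 2 : ℝ), (M 1 3 : ℝ)]

/-- `B(σ,t) = B_{σ(1)}^t ⋯ B_{σ(m)}^t` (ordered product). -/
def Bprod {m : ℕ} (B : Fin m → Matrix (Fin 4) (Fin 4) ℤ) (σ : Equiv.Perm (Fin m))
    (t : ℕ) : Matrix (Fin 4) (Fin 4) ℤ :=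
  ((List.finRange m).map (fun i => (B (σ i)) ^ t)).prod

/-- The `ℝ≥0`-cone generated by a finite family of vectors in `ℝⁿ`. -/
def coneFin {k n : ℕ} (v : Fin k → (Fin n → ℝ)) : Set (Fin n → ℝ) :=
  {x | ∃ r : Fin k → ℝ, (∀ i, 0 ≤ r i) ∧ x = ∑ i, r i • v i}

/-- The `ℝ≥0`-cone generated by a set `S ⊆ ℝⁿ`: all finite nonnegative real
linear combinations of elements of `S`. -/
def coneOfSet {n : ℕ} (S : Set (Fin n → ℝ)) : Set (Fin n → ℝ) :=
  {x | ∃ (l : ℕ) (r : Fin l → ℝ) (v : Fin l → (Fin n → ℝ)),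
    (∀ i, 0 ≤ r i) ∧ (∀ i, v i ∈ S) ∧ x = ∑ i, r i • v i}

/-! ### Auxiliary material -/

lemma UT_mul (a b c d e f a' b' c' d' e' f' : ℤ) :
    UT a b c d e f * UT a' b' c' d' e' f' =
      UT (a+a') (b+b') (c+c') (d+d'+a*b') (e+e'+b*c') (f+f'+a*e'+d*c') := by
  ext i j
  fin_cases i <;> fin_cases j <;>
    simp [UT, Matrix.mul_apply, Fin.sum_univ_four, Matrix.vecHead, Matrix.vecTail] <;> ring

lemma UT_one : (1 : Matrix (Fin 4) (Fin 4) ℤ) = UT 0 0 0 0 0 0 := by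
  ext i j
  fin_cases i <;> fin_cases j <;>
    simp [UT, Matrix.one_apply, Matrix.vecHead, Matrix.vecTail]

lemma UT_ext {a b c d e f a' b' c' d' e' f' : ℤ} (h1 : a = a') (h2 : b = b')
    (h3 : c = c') (h4 : d = d') (h5 : e = e') (h6 : f = f') :
    UT a b c d e f = UT a' b' c' d' e' f' := by rw [h1, h2, h3, h4, h5, h6]

lemma UT_pow (a b c d e f : ℤ) (t : ℕ) :
    (UT a b c d e f) ^ t =
      UT (t*a) (t*b) (t*c) (t*d + (t.choose 2)*(a*b)) (t*e + (t.choose 2)*(b*c))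
        (t*f + (t.choose 2)*(a*e + d*c) + (t.choose 3)*(a*b*c)) := by
  induction t with
  | zero => simpa using UT_one
  | succ t ih =>
      rw [pow_succ, ih, UT_mul]
      refine UT_ext ?_ ?_ ?_ ?_ ?_ ?_ <;>
        push_cast [Nat.choose_succ_succ t 1, Nat.choose_succ_succ t 2, Nat.choose_one_right] <;>
        ring

def rev4 : Equiv.Perm (Fin 4) := ⟨![3,2,1,0], ![3,2,1,0], by decide, by decide⟩

def QQ (a b : Fin 4 → ℤ) (σ : Equiv.Perm (Fin 4)) : ℤ :=
  a (σ 0)*b (σ 1)+a (σ 0)*b (σ 2)+a (σ 0)*b (σ 3)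
    +a (σ 1)*b (σ 2)+a (σ 1)*b (σ 3)+a (σ 2)*b (σ 3)

def PP (a b : Fin 4 → ℤ) : ℤ := a 0*b 0+a 1*b 1+a 2*b 2+a 3*b 3

noncomputable def Wf (a b c : Fin 4 → ℤ) (σ : Equiv.Perm (Fin 4)) : Fin 2 → ℝ :=
  ![(QQ a b σ : ℝ) + (PP a b : ℝ)/2, (QQ b c σ : ℝ) + (PP b c : ℝ)/2]

noncomputable def Vf (a b c d e : Fin 4 → ℤ) : Fin 2 → ℝ :=
  ![((d 0+d 1+d 2+d 3 : ℤ) : ℝ) - (PP a b : ℝ)/2,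
    ((e 0+e 1+e 2+e 3 : ℤ) : ℝ) - (PP b c : ℝ)/2]

lemma perm_sum (x : Fin 4 → ℤ) (σ : Equiv.Perm (Fin 4)) :
    x (σ 0) + x (σ 1) + x (σ 2) + x (σ 3) = x 0 + x 1 + x 2 + x 3 := by
  have h := Equiv.sum_comp σ x
  simpa [Fin.sum_univ_four] using h

lemma QQ_rev (a b : Fin 4 → ℤ) (σ : Equiv.Perm (Fin 4)) (ha : a 0+a 1+a 2+a 3 = 0) :
    QQ a b (σ * rev4) = - PP a b - QQ a b σ := by
  have e0 : (σ * rev4) 0 = σ 3 := rfl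
  have e1 : (σ * rev4) 1 = σ 2 := rfl
  have e2 : (σ * rev4) 2 = σ 1 := rfl
  have e3 : (σ * rev4) 3 = σ 0 := rfl
  have h1 := perm_sum a σ
  have h3 := perm_sum (fun i => a i * b i) σ
  simp only [QQ, PP, e0, e1, e2, e3]
  linear_combination (b (σ 0)+b (σ 1)+b (σ 2)+b (σ 3)) * h1
    + (b (σ 0)+b (σ 1)+b (σ 2)+b (σ 3)) * ha - h3

lemma Wf_rev (a b c : Fin 4 → ℤ) (σ : Equiv.Perm (Fin 4))
    (ha : a 0+a 1+a 2+a 3 = 0) (hb : b 0+b 1+b 2+b 3 = 0) (j : Fin 2) :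
    Wf a b c (σ * rev4) j = - Wf a b c σ j := by
  fin_cases j <;> simp [Wf, QQ_rev a b σ ha, QQ_rev b c σ hb] <;> push_cast <;> ring

lemma QQ_swap23 (a b : Fin 4 → ℤ) (σ : Equiv.Perm (Fin 4)) :
    QQ a b (σ * Equiv.swap (2:Fin 4) 3)
      = QQ a b σ - (a (σ 2)*b (σ 3) - a (σ 3)*b (σ 2)) := by
  have e0 : (σ * Equiv.swap (2:Fin 4) 3) 0 = σ 0 := by
    simp [Equiv.Perm.mul_apply, Equiv.swap_apply_of_ne_of_ne]
  have e1 : (σ * Equiv.swap (2:Fin 4) 3) 1 = σ 1 := by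
    simp [Equiv.Perm.mul_apply, Equiv.swap_apply_of_ne_of_ne]
  have e2 : (σ * Equiv.swap (2:Fin 4) 3) 2 = σ 3 := by
    simp [Equiv.Perm.mul_apply]
  have e3 : (σ * Equiv.swap (2:Fin 4) 3) 3 = σ 2 := by
    simp [Equiv.Perm.mul_apply]
  simp only [QQ, e0, e1, e2, e3]
  ring

lemma exists_perm23 : ∀ i j : Fin 4, i ≠ j →
    ∃ σ : Equiv.Perm (Fin 4), σ 2 = i ∧ σ 3 = j := by decide

lemma Bprod_formula (B : Fin 4 → Matrix (Fin 4) (Fin 4) ℤ) (a b c d e f : Fin 4 → ℤ)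
    (hBeq : ∀ i, B i = UT (a i) (b i) (c i) (d i) (e i) (f i))
    (ha : a 0 + a 1 + a 2 + a 3 = 0) (hb : b 0 + b 1 + b 2 + b 3 = 0)
    (hc : c 0 + c 1 + c 2 + c 3 = 0)
    (σ : Equiv.Perm (Fin 4)) (t : ℕ) :
    ∃ g, Bprod B σ t = UT 0 0 0
      ((t:ℤ) * (d 0+d 1+d 2+d 3) + (t.choose 2 : ℕ) * PP a b + (t:ℤ)*(t:ℤ)*(QQ a b σ))
      ((t:ℤ) * (e 0+e 1+e 2+e 3) + (t.choose 2 : ℕ) * PP b c + (t:ℤ)*(t:ℤ)*(QQ b c σ)) g := by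
  have hL : Bprod B σ t = B (σ 0)^t * (B (σ 1)^t * (B (σ 2)^t * (B (σ 3)^t * 1))) := rfl
  rw [hL, mul_one, hBeq, hBeq, hBeq, hBeq, UT_pow, UT_pow, UT_pow, UT_pow,
    UT_mul, UT_mul, UT_mul]
  simp only [QQ, PP]
  refine ⟨_, UT_ext ?_ ?_ ?_ ?_ ?_ rfl⟩
  · linear_combination (t:ℤ) * perm_sum a σ + (t:ℤ) * ha
  · linear_combination (t:ℤ) * perm_sum b σ + (t:ℤ) * hb
  · linear_combination (t:ℤ) * perm_sum c σ + (t:ℤ) * hc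
  · linear_combination (t:ℤ) * perm_sum d σ
      + ((t.choose 2 : ℕ):ℤ) * perm_sum (fun i => a i * b i) σ
  · linear_combination (t:ℤ) * perm_sum e σ
      + ((t.choose 2 : ℕ):ℤ) * perm_sum (fun i => b i * c i) σ


set_option maxHeartbeats 2000000 in
theorem stmt7 (B : Fin 4 → Matrix (Fin 4) (Fin 4) ℤ)
    (hB : ∀ i, B i ∈ UT4)
    (hsum : ∑ i, phi0 (B i) = 0)
    (hcone : coneFin (fun i => phi0R (B i)) = Set.univ) :
    (∀ (σ : Equiv.Perm (Fin 4)) (t : ℕ),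
        ∃ d e f, Bprod B σ t = UT 0 0 0 d e f) ∧
      coneOfSet {v | ∃ (σ : Equiv.Perm (Fin 4)) (t : ℕ), v = phi1R (Bprod B σ t)} =
        Set.univ := by
  simp only [UT4, Set.mem_setOf_eq] at hB
  choose a b c d e f hBeq using hB
  have hphi : ∀ i, phi0 (B i) = ![a i, b i, c i] := by
    intro i; rw [hBeq i]; funext j
    fin_cases j <;> simp [phi0, UT, Matrix.vecHead, Matrix.vecTail]
  have ha0 : a 0 + a 1 + a 2 + a 3 = 0 := by
    have h := congrFun hsum 0
    simpa [Finset.sum_apply, Fin.sum_univ_four, hphi] using h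
  have hb0 : b 0 + b 1 + b 2 + b 3 = 0 := by
    have h := congrFun hsum 1
    simpa [Finset.sum_apply, Fin.sum_univ_four, hphi] using h
  have hc0 : c 0 + c 1 + c 2 + c 3 = 0 := by
    have h := congrFun hsum 2
    simpa [Finset.sum_apply, Fin.sum_univ_four, hphi] using h
  have hkey := Bprod_formula B a b c d e f hBeq ha0 hb0 hc0
  constructor
  · intro σ t
    obtain ⟨g, hg⟩ := hkey σ t
    exact ⟨_, _, g, hg⟩
  -- the φ1 formula
  have hS : ∀ (σ : Equiv.Perm (Fin 4)) (t : ℕ) (j : Fin 2),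
      phi1R (Bprod B σ t) j = (t:ℝ) * Vf a b c d e j + (t:ℝ)^2 * Wf a b c σ j := by
    intro σ t j
    obtain ⟨g, hg⟩ := hkey σ t
    rw [hg]
    fin_cases j <;>
      simp [phi1R, UT, Vf, Wf, Matrix.vecHead, Matrix.vecTail] <;>
      push_cast [Nat.cast_choose_two] <;> ring
  -- independence from the cone hypothesis
  have hindep : ∀ x y z : ℝ,
      (∀ i : Fin 4, x * (a i:ℝ) + y * (b i:ℝ) + z * (c i:ℝ) = 0) →
      x = 0 ∧ y = 0 ∧ z = 0 := by
    intro x y z hxyz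
    have hmem : (![x,y,z] : Fin 3 → ℝ) ∈ coneFin (fun i => phi0R (B i)) := by
      rw [hcone]; trivial
    obtain ⟨r, hr, hEq⟩ := hmem
    have hphiR : ∀ (i : Fin 4) (j : Fin 3), phi0R (B i) j = (![(a i:ℝ), b i, c i]) j := by
      intro i j; fin_cases j <;> simp [phi0R, hphi]
    have hcomp : ∀ j : Fin 3, (![x,y,z] : Fin 3 → ℝ) j
        = r 0 * (![(a 0:ℝ), b 0, c 0]) j + r 1 * (![(a 1:ℝ), b 1, c 1]) j
          + r 2 * (![(a 2:ℝ), b 2, c 2]) j + r 3 * (![(a 3:ℝ), b 3, c 3]) j := by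
      intro j; rw [hEq]
      simp [Finset.sum_apply, Fin.sum_univ_four, hphiR]
    have hxv := hcomp 0
    have hyv := hcomp 1
    have hzv := hcomp 2
    simp only [Matrix.cons_val_zero, Matrix.cons_val_one, Matrix.head_cons,
      Matrix.cons_val_two, Matrix.tail_cons] at hxv hyv hzv
    have k : x^2 + y^2 + z^2 = 0 := by
      linear_combination x * hxv + y * hyv + z * hzv
        + r 0 * (hxyz 0) + r 1 * (hxyz 1) + r 2 * (hxyz 2) + r 3 * (hxyz 3)
    refine ⟨?_, ?_, ?_⟩ <;> nlinarith [sq_nonneg x, sq_nonneg y, sq_nonneg z]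
  have hAB : ∀ α β : ℝ,
      (∀ i j : Fin 4, α * ((a i:ℝ)*(b j:ℝ) - (a j:ℝ)*(b i:ℝ))
        + β * ((b i:ℝ)*(c j:ℝ) - (b j:ℝ)*(c i:ℝ)) = 0) →
      α = 0 ∧ β = 0 := by
    intro α β h
    by_cases hbz : ∀ i : Fin 4, (b i:ℝ) = 0
    · have h10 := hindep 0 1 0 (fun i => by rw [hbz i]; ring)
      exact absurd h10.2.1 one_ne_zero
    · push_neg at hbz
      obtain ⟨k, hk⟩ := hbz
      have hli : ∀ i : Fin 4,
          α * (a i:ℝ) + (-((α * a k - β * c k) / (b k))) * (b i:ℝ) + (-β) * (c i:ℝ) = 0 := by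
        intro i
        have hik := h i k
        field_simp
        linear_combination hik
      obtain ⟨h1, _, h3⟩ := hindep _ _ _ hli
      exact ⟨h1, by linarith⟩
  have hclaim : ∀ u0 u1 : ℝ, ¬(u0 = 0 ∧ u1 = 0) →
      ∃ σ : Equiv.Perm (Fin 4), u0 * Wf a b c σ 0 + u1 * Wf a b c σ 1 ≠ 0 := by
    intro u0 u1 hu
    by_contra hno
    push_neg at hno
    apply hu
    apply hAB u0 u1
    intro i j
    rcases eq_or_ne i j with rfl | hne
    · ring
    · obtain ⟨σ, h2, h3⟩ := exists_perm23 i j hne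
      have hA := hno σ
      have hB2 := hno (σ * Equiv.swap (2:Fin 4) 3)
      simp only [Wf, Matrix.cons_val_zero, Matrix.cons_val_one, Matrix.head_cons,
        QQ_swap23] at hA hB2
      rw [h2, h3] at hB2
      push_cast at hA hB2
      linear_combination hA - hB2
  -- two independent leading vectors
  -- two independent leading vectors
  obtain ⟨σ1, hσ1⟩ := hclaim 1 0 (by simp)
  have hw10 : Wf a b c σ1 0 ≠ 0 := by simpa using hσ1
  obtain ⟨σ2, hσ2⟩ := hclaim (-(Wf a b c σ1 1)) (Wf a b c σ1 0)
    (fun h => hw10 h.2)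
  obtain ⟨Δ, hΔdef⟩ : ∃ r : ℝ,
      r = Wf a b c σ1 0 * Wf a b c σ2 1 - Wf a b c σ1 1 * Wf a b c σ2 0 := ⟨_, rfl⟩
  have hΔ : Δ ≠ 0 := by
    rw [hΔdef]
    intro h
    apply hσ2
    linear_combination h
  apply Set.eq_univ_of_forall
  intro x
  obtain ⟨lam1, hlam1⟩ : ∃ r : ℝ,
      r = (x 0 * Wf a b c σ2 1 - x 1 * Wf a b c σ2 0) / Δ := ⟨_, rfl⟩
  obtain ⟨lam2, hlam2⟩ : ∃ r : ℝ,
      r = (Wf a b c σ1 0 * x 1 - Wf a b c σ1 1 * x 0) / Δ := ⟨_, rfl⟩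
  obtain ⟨p1, hp1⟩ : ∃ r : ℝ,
      r = (Vf a b c d e 0 * Wf a b c σ2 1 - Vf a b c d e 1 * Wf a b c σ2 0) / Δ := ⟨_, rfl⟩
  obtain ⟨p2, hp2⟩ : ∃ r : ℝ,
      r = (Wf a b c σ1 0 * Vf a b c d e 1 - Wf a b c σ1 1 * Vf a b c d e 0) / Δ := ⟨_, rfl⟩
  have hx : ∀ j : Fin 2, x j = lam1 * Wf a b c σ1 j + lam2 * Wf a b c σ2 j := by
    intro j
    rw [hlam1, hlam2]
    fin_cases j <;> simp only [Fin.zero_eta, Fin.mk_one] <;>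
      rw [div_mul_eq_mul_div, div_mul_eq_mul_div, ← add_div,
        eq_div_iff hΔ, hΔdef] <;> ring
  have hV : ∀ j : Fin 2, Vf a b c d e j = p1 * Wf a b c σ1 j + p2 * Wf a b c σ2 j := by
    intro j
    rw [hp1, hp2]
    fin_cases j <;> simp only [Fin.zero_eta, Fin.mk_one] <;>
      rw [div_mul_eq_mul_div, div_mul_eq_mul_div, ← add_div,
        eq_div_iff hΔ, hΔdef] <;> ring
  clear hΔdef hlam1 hlam2 hp1 hp2 hσ1 hσ2 hw10 hΔ
  obtain ⟨t, ht⟩ := exists_nat_ge (|lam1| + |lam2| + |p1| + |p2| + 1)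
  have hT1 : (1:ℝ) ≤ (t:ℝ) :=
    le_trans (by nlinarith [abs_nonneg lam1, abs_nonneg lam2, abs_nonneg p1, abs_nonneg p2]) ht
  have hT0 : (t:ℝ) ≠ 0 := by intro h0; rw [h0] at hT1; linarith
  obtain ⟨δ1, hδ1⟩ : ∃ r : ℝ, r = (lam1 - (t:ℝ) * p1)/(t:ℝ)^2 := ⟨_, rfl⟩
  obtain ⟨δ2, hδ2⟩ : ∃ r : ℝ, r = (lam2 - (t:ℝ) * p2)/(t:ℝ)^2 := ⟨_, rfl⟩
  have habs : |δ1| + |δ2| ≤ 1 := by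
    have h1 : |lam1 - (t:ℝ)*p1| ≤ |lam1| + (t:ℝ)*|p1| := by
      calc |lam1 - (t:ℝ)*p1| ≤ |lam1| + |(t:ℝ)*p1| := abs_sub _ _
      _ = |lam1| + (t:ℝ)*|p1| := by rw [abs_mul, Nat.abs_cast]
    have h2 : |lam2 - (t:ℝ)*p2| ≤ |lam2| + (t:ℝ)*|p2| := by
      calc |lam2 - (t:ℝ)*p2| ≤ |lam2| + |(t:ℝ)*p2| := abs_sub _ _
      _ = |lam2| + (t:ℝ)*|p2| := by rw [abs_mul, Nat.abs_cast]
    have e1 : |δ1| = |lam1 - (t:ℝ)*p1|/(t:ℝ)^2 := by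
      rw [hδ1, abs_div, abs_of_pos (by positivity : (0:ℝ) < (t:ℝ)^2)]
    have e2 : |δ2| = |lam2 - (t:ℝ)*p2|/(t:ℝ)^2 := by
      rw [hδ2, abs_div, abs_of_pos (by positivity : (0:ℝ) < (t:ℝ)^2)]
    rw [e1, e2, ← add_div, div_le_one (by positivity)]
    have hS0 : (0:ℝ) ≤ (t:ℝ) := by linarith
    have q1 : (0:ℝ) ≤ (t:ℝ) * ((t:ℝ) - (|lam1|+|lam2|+|p1|+|p2|+1)) :=
      mul_nonneg hS0 (by linarith)
    have q2 : (0:ℝ) ≤ ((t:ℝ) - 1) * (|lam1|+|lam2|) :=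
      mul_nonneg (by linarith) (by positivity)
    nlinarith [h1, h2, q1, q2]
  have he1 : (t:ℝ)^2 * δ1 = lam1 - (t:ℝ) * p1 := by
    rw [hδ1]; field_simp
  have he2 : (t:ℝ)^2 * δ2 = lam2 - (t:ℝ) * p2 := by
    rw [hδ2]; field_simp
  have hrev1 : ∀ j : Fin 2, Wf a b c (σ1 * rev4) j = - Wf a b c σ1 j :=
    Wf_rev a b c σ1 ha0 hb0
  have hrev2 : ∀ j : Fin 2, Wf a b c (σ2 * rev4) j = - Wf a b c σ2 j :=
    Wf_rev a b c σ2 ha0 hb0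
  refine ⟨4, ![(1 - |δ2| + δ1)/2, (1 - |δ2| - δ1)/2, (|δ2| + δ2)/2, (|δ2| - δ2)/2],
    ![phi1R (Bprod B σ1 t), phi1R (Bprod B (σ1 * rev4) t),
      phi1R (Bprod B σ2 t), phi1R (Bprod B (σ2 * rev4) t)], ?_, ?_, ?_⟩
  · intro i
    have k1 := neg_abs_le δ1
    have k2 := le_abs_self δ1
    have k3 := neg_abs_le δ2
    have k4 := le_abs_self δ2
    have k5 := abs_nonneg δ1
    have k6 := abs_nonneg δ2
    fin_cases i <;> norm_num <;> linarith
  · intro i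
    fin_cases i
    · exact ⟨σ1, t, rfl⟩
    · exact ⟨σ1 * rev4, t, rfl⟩
    · exact ⟨σ2, t, rfl⟩
    · exact ⟨σ2 * rev4, t, rfl⟩
  · funext j
    rw [Fin.sum_univ_four]
    simp only [Pi.add_apply, Pi.smul_apply, smul_eq_mul,
      Matrix.cons_val_zero, Matrix.cons_val_one, Matrix.head_cons,
      Matrix.cons_val_two, Matrix.tail_cons, Matrix.cons_val_three]
    rw [hS σ1 t j, hS (σ1 * rev4) t j, hS σ2 t j, hS (σ2 * rev4) t j,
      hrev1 j, hrev2 j, hV j, hx j]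
    linear_combination (-(Wf a b c σ1 j)) * he1 + (-(Wf a b c σ2 j)) * he2
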